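/- arXiv:0903.4842 — 3 statements merged into one kernel-verified Lean document; each statement's English description precedes it below -/
import Mathlib

section
/- Let p : ℝ^d → ℝ be defined by p(x) = 1/√(1 - |x|²) for |x| < 1 and p(x) = 0 otherwise. Then for every line ℓ through the origin in ℝ^d and every point z in the orthogonal complement E = ℓ^⊥ with |z| < 1, the integral of p along the affine line ℓ + z equals π. -/
open MeasureTheory

/-- For `p(x) = 1/√(1-|x|²)` (for `|x|<1`, else `0`), the integral of `p`
along any affine line `z + ℝ v` with `v` a unit vector and `z ⊥ v`, `|z| < 1`, equals `π`. -/
theorem integral_along_line_eq_pi (d : ℕ)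
    (p : EuclideanSpace ℝ (Fin d) → ℝ)
    (hp : ∀ x, p x = if ‖x‖ < 1 then 1 / Real.sqrt (1 - ‖x‖ ^ 2) else 0)
    (v z : EuclideanSpace ℝ (Fin d)) (hv : ‖v‖ = 1)
    (hzv : (inner ℝ v z : ℝ) = 0) (hz : ‖z‖ < 1) :
    ∫ t : ℝ, p (z + t • v) = Real.pi := by
  have h1 : ‖z‖ ^ 2 < 1 := by nlinarith [norm_nonneg z]
  set a := Real.sqrt (1 - ‖z‖ ^ 2) with ha_def
  have ha : 0 < a := Real.sqrt_pos.2 (by linarith)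
  have ha2 : a ^ 2 = 1 - ‖z‖ ^ 2 := Real.sq_sqrt (by linarith)
  have hnorm : ∀ t : ℝ, ‖z + t • v‖ ^ 2 = ‖z‖ ^ 2 + t ^ 2 := by
    intro t
    have h0 : (inner ℝ z (t • v) : ℝ) = 0 := by
      rw [real_inner_smul_right, real_inner_comm, hzv, mul_zero]
    rw [norm_add_sq_real, h0, norm_smul, hv]
    simp [sq_abs]
  -- step 1: pointwise identity
  have key : ∀ t : ℝ, p (z + t • v) =
      Set.indicator (Set.Ioo (-a) a) (fun t => 1 / Real.sqrt (a ^ 2 - t ^ 2)) t := by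
    intro t
    rw [hp]
    by_cases ht : t ∈ Set.Ioo (-a) a
    · have h2 : t ^ 2 < a ^ 2 := by
        have := ht.1; have := ht.2
        nlinarith
      have hlt : ‖z + t • v‖ < 1 := by
        have h3 : ‖z + t • v‖ ^ 2 < 1 := by rw [hnorm]; nlinarith
        nlinarith [norm_nonneg (z + t • v)]
      rw [if_pos hlt, Set.indicator_of_mem ht, hnorm]
      rw [ha2]; ring_nf
    · have h2 : ¬ t ^ 2 < a ^ 2 := by
        simp only [Set.mem_Ioo, not_and_or, not_lt] at ht
        rcases ht with h | h <;> nlinarith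
      have hge : ¬ ‖z + t • v‖ < 1 := by
        intro h
        apply h2
        have := hnorm t
        nlinarith [norm_nonneg (z + t • v)]
      rw [if_neg hge, Set.indicator_of_notMem ht]
  simp_rw [key]
  rw [MeasureTheory.integral_indicator measurableSet_Ioo]
  -- step 2: change of variables t = a * sin θ
  have himg : (fun θ : ℝ => a * Real.sin θ) '' Set.Ioo (-(Real.pi/2)) (Real.pi/2)
      = Set.Ioo (-a) a := by
    ext y
    constructor
    · rintro ⟨θ, hθ, rfl⟩
      have h1 : Real.sin θ < 1 := by
        have := Real.strictMonoOn_sin (Set.mem_Icc.2 ⟨hθ.1.le, hθ.2.le⟩)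
          (Set.mem_Icc.2 ⟨by linarith [Real.pi_pos], le_refl _⟩) hθ.2
        simpa using this
      have h2 : -1 < Real.sin θ := by
        have := Real.strictMonoOn_sin (Set.mem_Icc.2 ⟨le_refl _, by linarith [Real.pi_pos]⟩)
          (Set.mem_Icc.2 ⟨hθ.1.le, hθ.2.le⟩) hθ.1
        simpa using this
      constructor
      · show -a < a * Real.sin θ; nlinarith
      · show a * Real.sin θ < a; nlinarith
    · rintro ⟨h1, h2⟩
      refine ⟨Real.arcsin (y / a), ⟨?_, ?_⟩, ?_⟩
      · exact Real.neg_pi_div_two_lt_arcsin.2 (by rw [neg_lt, ← neg_div]; exact (div_lt_one ha).2 (by linarith))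
      · exact Real.arcsin_lt_pi_div_two.2 ((div_lt_one ha).2 h2)
      · show a * Real.sin (Real.arcsin (y / a)) = y
        rw [Real.sin_arcsin ((le_div_iff₀ ha).2 (by linarith)) ((div_le_one ha).2 h2.le)]
        field_simp
  rw [← himg]
  rw [MeasureTheory.integral_image_eq_integral_abs_deriv_smul measurableSet_Ioo
    (f' := fun θ => a * Real.cos θ)
    (fun x _ => ((Real.hasDerivAt_sin x).const_mul a).hasDerivWithinAt)
    (fun x hx y hy hxy => by
      exact Real.strictMonoOn_sin.injOn (Set.mem_Icc.2 ⟨hx.1.le, hx.2.le⟩)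
        (Set.mem_Icc.2 ⟨hy.1.le, hy.2.le⟩) (mul_left_cancel₀ ha.ne' hxy))]
  have : ∀ θ ∈ Set.Ioo (-(Real.pi/2)) (Real.pi/2),
      |a * Real.cos θ| • (1 / Real.sqrt (a ^ 2 - (a * Real.sin θ) ^ 2)) = 1 := by
    intro θ hθ
    have hc : 0 < Real.cos θ := Real.cos_pos_of_mem_Ioo hθ
    have hsq : a ^ 2 - (a * Real.sin θ) ^ 2 = (a * Real.cos θ) ^ 2 := by
      have := Real.sin_sq_add_cos_sq θ
      nlinarith
    rw [hsq, Real.sqrt_sq (by positivity), smul_eq_mul, abs_of_pos (by positivity)]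
    field_simp
  rw [MeasureTheory.setIntegral_congr_fun measurableSet_Ioo this]
  simp [Real.pi_pos.le]
end

section
/- If the closed Euclidean unit ball B₂^d in ℝ^d (d ≥ 1) is covered by finitely many cylinders C₁, ..., C_N, where each Cᵢ = ℓᵢ + Bᵢ with ℓᵢ a line through the origin and Bᵢ a measurable subset of ℓᵢ^⊥, then Σᵢ vol_{d-1}(Bᵢ) ≥ vol_{d-1}(B₂^{d-1}). -/
open MeasureTheory

section CylinderCoverAux

open Real Set Module

private lemma L1 {a : ℝ} (ha : 0 < a) :
    ∫⁻ t in Set.Ioo (-a) a, ENNReal.ofReal (Real.sqrt (a^2 - t^2))⁻¹ = ENNReal.ofReal π := by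
  have himg : (fun θ => a * Real.sin θ) '' Set.Ioo (-(π/2)) (π/2) = Set.Ioo (-a) a := by
    apply Set.Subset.antisymm
    · rintro _ ⟨θ, hθ, rfl⟩
      have h1 : Real.sin θ < 1 := by
        have := Real.strictMonoOn_sin (Set.mem_Icc_of_Ioo hθ) (Set.right_mem_Icc.2 (by linarith [Real.pi_pos])) hθ.2
        simpa using this
      have h2 : -1 < Real.sin θ := by
        have := Real.strictMonoOn_sin (Set.left_mem_Icc.2 (by linarith [Real.pi_pos])) (Set.mem_Icc_of_Ioo hθ) hθ.1
        simpa using this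
      simp only [Set.mem_Ioo]
      constructor <;> nlinarith
    · rintro u hu
      refine ⟨Real.arcsin (u / a), ⟨?_, ?_⟩, ?_⟩
      · exact Real.neg_pi_div_two_lt_arcsin.2 (by rw [lt_div_iff₀ ha]; nlinarith [hu.1])
      · exact Real.arcsin_lt_pi_div_two.2 (by rw [div_lt_iff₀ ha]; nlinarith [hu.2])
      · simp only
        rw [Real.sin_arcsin (by rw [le_div_iff₀ ha]; nlinarith [hu.1]) (by rw [div_le_iff₀ ha]; nlinarith [hu.2])]
        field_simp
  rw [← himg]
  rw [lintegral_image_eq_lintegral_abs_det_fderiv_mul volume measurableSet_Ioo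
      (f := fun θ => a * Real.sin θ)
      (f' := fun θ => (1 : ℝ →L[ℝ] ℝ).smulRight (a * Real.cos θ))
      (fun θ _ => (((Real.hasDerivAt_sin θ).const_mul a).hasDerivWithinAt).hasFDerivWithinAt)
      ?_]
  · have : ∀ θ ∈ Set.Ioo (-(π/2)) (π/2),
        ENNReal.ofReal |((1 : ℝ →L[ℝ] ℝ).smulRight (a * Real.cos θ)).det|
          * ENNReal.ofReal (Real.sqrt (a^2 - (a * Real.sin θ)^2))⁻¹ = 1 := by
      intro θ hθ
      have hc : 0 < Real.cos θ := Real.cos_pos_of_mem_Ioo hθ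
      have hac : 0 < a * Real.cos θ := mul_pos ha hc
      rw [ContinuousLinearMap.smulRight_one_eq_toSpanSingleton, ContinuousLinearMap.det_toSpanSingleton]
      have hsq : a^2 - (a * Real.sin θ)^2 = (a * Real.cos θ)^2 := by
        have := Real.sin_sq_add_cos_sq θ; nlinarith
      rw [hsq, Real.sqrt_sq hac.le, abs_of_pos hac, ← ENNReal.ofReal_mul hac.le,
        mul_inv_cancel₀ hac.ne', ENNReal.ofReal_one]
    rw [setLIntegral_congr_fun measurableSet_Ioo this]
    simp [Real.volume_Ioo]

  · intro θ hθ θ' hθ' h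
    have := Real.injOn_sin (Set.mem_Icc_of_Ioo hθ) (Set.mem_Icc_of_Ioo hθ')
    simp only at h
    exact this (by nlinarith [h])

variable {m : ℕ}

noncomputable def G (p : ℝ × EuclideanSpace ℝ (Fin m)) : ENNReal :=
  Set.indicator {q : ℝ × EuclideanSpace ℝ (Fin m) | q.1^2 + ‖q.2‖^2 < 1}
    (fun q => ENNReal.ofReal (Real.sqrt (1 - (q.1^2 + ‖q.2‖^2)))⁻¹) p

lemma G_meas : Measurable (G (m := m)) := by
  apply Measurable.indicator
  · apply Measurable.ennreal_ofReal
    fun_prop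
  · apply measurableSet_lt
    · fun_prop
    · fun_prop

lemma G_inner (y : EuclideanSpace ℝ (Fin m)) :
    ∫⁻ t : ℝ, G (t, y) = ENNReal.ofReal π * Set.indicator (Metric.ball (0 : EuclideanSpace ℝ (Fin m)) 1) 1 y := by
  by_cases hy : ‖y‖ < 1
  · have ha : 0 < Real.sqrt (1 - ‖y‖^2) := Real.sqrt_pos.2 (by nlinarith [norm_nonneg y])
    set a := Real.sqrt (1 - ‖y‖^2) with ha_def
    have ha2 : a^2 = 1 - ‖y‖^2 := Real.sq_sqrt (by nlinarith [norm_nonneg y])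
    have hset : ∀ t : ℝ, ((t, y) ∈ {q : ℝ × EuclideanSpace ℝ (Fin m) | q.1^2 + ‖q.2‖^2 < 1}) ↔ t ∈ Set.Ioo (-a) a := by
      intro t
      simp only [Set.mem_setOf_eq, Set.mem_Ioo]
      constructor
      · intro h
        have ht2 : t^2 < a^2 := by nlinarith
        exact abs_lt_of_sq_lt_sq' ht2 ha.le
      · rintro ⟨h1, h2⟩; nlinarith
    have : ∀ t : ℝ, G (t, y) = Set.indicator (Set.Ioo (-a) a)
        (fun t => ENNReal.ofReal (Real.sqrt (a^2 - t^2))⁻¹) t := by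
      intro t
      rw [G]
      by_cases ht : t ∈ Set.Ioo (-a) a
      · rw [Set.indicator_of_mem ((hset t).2 ht), Set.indicator_of_mem ht]
        congr 2
        rw [ha2]; ring
      · rw [Set.indicator_of_notMem (fun h => ht ((hset t).1 h)), Set.indicator_of_notMem ht]
    simp_rw [this]
    rw [lintegral_indicator measurableSet_Ioo, L1 ha,
      Set.indicator_of_mem (by simpa using hy), Pi.one_apply, mul_one]
  · have : ∀ t : ℝ, G (t, y) = 0 := by
      intro t
      rw [G, Set.indicator_of_notMem]
      intro h
      simp only [Set.mem_setOf_eq] at h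
      nlinarith [sq_nonneg t, not_lt.1 hy, norm_nonneg y]
    simp_rw [this]
    rw [Set.indicator_of_notMem (by simpa using hy)]
    simp

lemma lemB (T : Set (EuclideanSpace ℝ (Fin m))) (hT : MeasurableSet T) :
    ∫⁻ p : ℝ × EuclideanSpace ℝ (Fin m) in Prod.snd ⁻¹' T, G p
      = ENNReal.ofReal π * volume (T ∩ Metric.ball 0 1) := by
  rw [← lintegral_indicator (measurable_snd hT)]
  rw [Measure.volume_eq_prod, lintegral_prod_symm _ ((G_meas.indicator (measurable_snd hT)).aemeasurable)]
  have : ∀ y : EuclideanSpace ℝ (Fin m),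
      (∫⁻ t : ℝ, Set.indicator (Prod.snd ⁻¹' T) G (t, y))
        = Set.indicator (T ∩ Metric.ball 0 1) (fun _ => ENNReal.ofReal π) y := by
    intro y
    by_cases hyT : y ∈ T
    · have : ∀ t : ℝ, Set.indicator (Prod.snd ⁻¹' T) G (t, y) = G (t, y) := fun t =>
        Set.indicator_of_mem (by simpa using hyT) _
      simp_rw [this, G_inner y]
      by_cases hyB : y ∈ Metric.ball (0 : EuclideanSpace ℝ (Fin m)) 1
      · rw [Set.indicator_of_mem hyB, Set.indicator_of_mem (Set.mem_inter hyT hyB) (fun _ => ENNReal.ofReal π), Pi.one_apply, mul_one]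
      · rw [Set.indicator_of_notMem hyB, Set.indicator_of_notMem (fun (h : y ∈ T ∩ Metric.ball 0 1) => hyB h.2) (fun _ => ENNReal.ofReal π), mul_zero]
    · have : ∀ t : ℝ, Set.indicator (Prod.snd ⁻¹' T) G (t, y) = 0 := fun t =>
        Set.indicator_of_notMem (by simpa using hyT) _
      simp_rw [this, Set.indicator_of_notMem (fun (h : y ∈ T ∩ Metric.ball 0 1) => hyT h.1) (fun _ => ENNReal.ofReal π)]
      simp
  simp_rw [this]
  rw [lintegral_indicator (hT.inter measurableSet_ball), setLIntegral_const]

noncomputable def ψ (m : ℕ) : EuclideanSpace ℝ (Fin (m+1)) ≃ᵐ ℝ × EuclideanSpace ℝ (Fin m) :=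
  (MeasurableEquiv.toLp 2 (Fin (m+1) → ℝ)).symm.trans
    ((MeasurableEquiv.piFinSuccAbove (fun _ => ℝ) 0).trans
      ((MeasurableEquiv.refl ℝ).prodCongr (MeasurableEquiv.toLp 2 (Fin m → ℝ))))

lemma ψ_mp : MeasurePreserving (ψ m) volume volume := by
  have h1 := EuclideanSpace.volume_preserving_symm_measurableEquiv_toLp (Fin (m+1))
  have h2 := measurePreserving_piFinSuccAbove (fun _ : Fin (m+1) => (volume : Measure ℝ)) 0
  have h3 := (MeasurePreserving.id (volume : Measure ℝ)).prod
    (EuclideanSpace.volume_preserving_symm_measurableEquiv_toLp (Fin m)).symm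
  have h2' : MeasurePreserving (MeasurableEquiv.piFinSuccAbove (fun _ : Fin (m+1) => ℝ) 0)
      (volume : Measure (Fin (m+1) → ℝ)) ((volume : Measure ℝ).prod (volume : Measure (Fin m → ℝ))) := by
    simpa [volume_pi] using h2
  exact ((h3.comp h2').comp h1 : _)

lemma ψ_apply (x : EuclideanSpace ℝ (Fin (m+1))) :
    ψ m x = (x 0, WithLp.toLp 2 (fun j : Fin m => x j.succ)) := by
  ext j
  · rfl
  · show x (Fin.succAbove 0 j) = x j.succ
    rw [Fin.zero_succAbove]

lemma euc_norm_sq {n : ℕ} (x : EuclideanSpace ℝ (Fin n)) : ‖x‖^2 = ∑ i, x i ^ 2 := by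
  rw [EuclideanSpace.norm_eq, Real.sq_sqrt (by positivity)]
  simp [sq_abs]

lemma ψ_norm (x : EuclideanSpace ℝ (Fin (m+1))) :
    (ψ m x).1^2 + ‖(ψ m x).2‖^2 = ‖x‖^2 := by
  rw [ψ_apply, euc_norm_sq, euc_norm_sq]
  rw [Fin.sum_univ_succ]

variable {V : Type*} [NormedAddCommGroup V] [InnerProductSpace ℝ V]
  [MeasureSpace V] [BorelSpace V]

-- density function on a general space
noncomputable def fd (x : V) : ENNReal :=
  Set.indicator (Metric.ball (0 : V) 1) (fun x => ENNReal.ofReal (Real.sqrt (1 - ‖x‖^2))⁻¹) x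

lemma fd_of_not_mem {x : V} (hx : x ∉ Metric.ball (0 : V) 1) : fd x = 0 :=
  Set.indicator_of_notMem hx _

lemma lemA (e : V ≃ᵐ ℝ × EuclideanSpace ℝ (Fin m)) (he : MeasurePreserving e volume volume)
    (hnorm : ∀ x : V, (e x).1^2 + ‖(e x).2‖^2 = ‖x‖^2)
    (A : Set V) (T : Set (EuclideanSpace ℝ (Fin m))) (hT : MeasurableSet T)
    (hA : ∀ x, x ∈ A ↔ (e x).2 ∈ T) :
    (volume : Measure V).withDensity fd A = ENNReal.ofReal π * volume (T ∩ Metric.ball 0 1) := by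
  have hAeq : A = e ⁻¹' (Prod.snd ⁻¹' T) := by
    ext x; simpa using hA x
  have hAm : MeasurableSet A := by
    rw [hAeq]; exact e.measurable (measurable_snd hT)
  rw [withDensity_apply _ hAm]
  have hpre : e.symm ⁻¹' A = Prod.snd ⁻¹' T := by
    ext p
    simp only [Set.mem_preimage, hA (e.symm p), MeasurableEquiv.apply_symm_apply]
  have := (he.symm e).setLIntegral_comp_preimage_emb e.symm.measurableEmbedding fd A
  rw [← this, hpre]
  rw [← lemB T hT]
  apply setLIntegral_congr_fun (measurable_snd hT)
  intro p _
  have hn := hnorm (e.symm p)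
  rw [MeasurableEquiv.apply_symm_apply] at hn
  show fd (e.symm p) = G p
  rw [fd, G]
  have hball : e.symm p ∈ Metric.ball (0 : V) 1 ↔ p.1^2 + ‖p.2‖^2 < 1 := by
    rw [Metric.mem_ball, dist_zero_right, hn]
    constructor
    · intro h; nlinarith [norm_nonneg (e.symm p)]
    · intro h; nlinarith [norm_nonneg (e.symm p)]
  by_cases hp : p.1^2 + ‖p.2‖^2 < 1
  · rw [Set.indicator_of_mem (hball.2 hp), Set.indicator_of_mem (show p ∈ {q : ℝ × EuclideanSpace ℝ (Fin m) | q.1^2 + ‖q.2‖^2 < 1} from hp)]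
    rw [← hn]
  · rw [Set.indicator_of_notMem (fun h => hp (hball.1 h)),
      Set.indicator_of_notMem (show p ∉ {q : ℝ × EuclideanSpace ℝ (Fin m) | q.1^2 + ‖q.2‖^2 < 1} from hp)]

lemma cylinder_repr (ℓ : Submodule ℝ (EuclideanSpace ℝ (Fin (m+1))))
    (hℓ : finrank ℝ ℓ = 1) (B : Set ↥ℓᗮ) (hB : MeasurableSet B) :
    ∃ (e : EuclideanSpace ℝ (Fin (m+1)) ≃ᵐ ℝ × EuclideanSpace ℝ (Fin m))
      (T : Set (EuclideanSpace ℝ (Fin m))),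
      MeasurePreserving e volume volume ∧
      (∀ x, (e x).1^2 + ‖(e x).2‖^2 = ‖x‖^2) ∧
      MeasurableSet T ∧ volume T = volume B ∧
      (∀ x, (∃ y ∈ ℓ, ∃ b ∈ B, x = y + (b : EuclideanSpace ℝ (Fin (m+1)))) ↔ (e x).2 ∈ T) := by
  classical
  -- unit vector in ℓ
  have hbot : ℓ ≠ ⊥ := by
    intro h; rw [h, finrank_bot] at hℓ; omega
  obtain ⟨x0, hx0ℓ, hx0⟩ := Submodule.exists_mem_ne_zero_of_ne_bot hbot
  set u : EuclideanSpace ℝ (Fin (m+1)) := ‖x0‖⁻¹ • x0 with hu_def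
  have hu_norm : ‖u‖ = 1 := by
    rw [hu_def, norm_smul, norm_inv, norm_norm, inv_mul_cancel₀ (norm_ne_zero_iff.2 hx0)]
  have huℓ : u ∈ ℓ := ℓ.smul_mem _ hx0ℓ
  -- orthonormal basis of ℓᗮ
  have hrank : finrank ℝ ↥ℓᗮ = m := by
    have := Submodule.finrank_add_finrank_orthogonal (K := ℓ)
    rw [hℓ, finrank_euclideanSpace_fin] at this
    omega
  set v : OrthonormalBasis (Fin m) ℝ ↥ℓᗮ :=
    (stdOrthonormalBasis ℝ ↥ℓᗮ).reindex (finCongr hrank) with hv_def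
  -- the combined orthonormal basis
  set w : Fin (m+1) → EuclideanSpace ℝ (Fin (m+1)) :=
    Fin.cons u (fun i => (v i : EuclideanSpace ℝ (Fin (m+1)))) with hw_def
  have hon : Orthonormal ℝ w := by
    rw [orthonormal_iff_ite]
    intro i j
    induction i using Fin.cases with
    | zero =>
      induction j using Fin.cases with
      | zero =>
        simp only [hw_def, Fin.cons_zero, if_pos rfl]
        rw [real_inner_self_eq_norm_sq, hu_norm]; norm_num
      | succ j =>
        simp only [hw_def, Fin.cons_zero, Fin.cons_succ, if_neg (Fin.succ_ne_zero j).symm]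
        exact Submodule.inner_right_of_mem_orthogonal huℓ (v j).2
    | succ i =>
      induction j using Fin.cases with
      | zero =>
        simp only [hw_def, Fin.cons_zero, Fin.cons_succ, if_neg (Fin.succ_ne_zero i)]
        exact Submodule.inner_left_of_mem_orthogonal huℓ (v i).2
      | succ j =>
        simp only [hw_def, Fin.cons_succ]
        rw [← Submodule.coe_inner]
        rw [orthonormal_iff_ite.1 v.orthonormal i j]
        simp [Fin.succ_inj]
  have hsp : ⊤ ≤ Submodule.span ℝ (Set.range w) := by
    rw [hon.linearIndependent.span_eq_top_of_card_eq_finrank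
      (by simp [finrank_euclideanSpace_fin])]
  set b : OrthonormalBasis (Fin (m+1)) ℝ (EuclideanSpace ℝ (Fin (m+1))) :=
    OrthonormalBasis.mk hon hsp with hb_def
  have hb_coe : ∀ i, b i = w i := fun i => by rw [hb_def, OrthonormalBasis.coe_mk]
  set e : EuclideanSpace ℝ (Fin (m+1)) ≃ᵐ ℝ × EuclideanSpace ℝ (Fin m) :=
    b.measurableEquiv.trans (ψ m) with he_def
  have hbme : ∀ x, b.measurableEquiv x = b.repr x := fun _ => rfl
  have he_apply : ∀ x, e x = (b.repr x 0, WithLp.toLp 2 (fun j : Fin m => b.repr x j.succ)) := by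
    intro x
    rw [he_def, MeasurableEquiv.trans_apply, hbme, ψ_apply]
  set T : Set (EuclideanSpace ℝ (Fin m)) := v.repr.symm ⁻¹' B with hT_def
  -- the decomposition of x
  have hdecomp : ∀ x : EuclideanSpace ℝ (Fin (m+1)),
      x = b.repr x 0 • u + ((v.repr.symm (WithLp.toLp 2 (fun j : Fin m => b.repr x j.succ)) : ↥ℓᗮ) : EuclideanSpace ℝ (Fin (m+1))) := by
    intro x
    conv_lhs => rw [← b.sum_repr x]
    rw [Fin.sum_univ_succ]
    congr 1
    · rw [hb_coe, hw_def, Fin.cons_zero]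
    · rw [← OrthonormalBasis.sum_repr_symm]
      push_cast
      refine Finset.sum_congr rfl (fun j _ => ?_)
      rw [hb_coe, hw_def, Fin.cons_succ]
  refine ⟨e, T, ψ_mp.comp b.measurePreserving_measurableEquiv, ?_, ?_, ?_, ?_⟩
  · intro x
    rw [he_def, MeasurableEquiv.trans_apply, hbme, ψ_norm, b.repr.norm_map]
  · exact v.repr.symm.continuous.measurable hB
  · exact (v.measurePreserving_repr_symm).measure_preimage hB.nullMeasurableSet
  · intro x
    rw [he_apply]
    constructor
    · rintro ⟨y, hy, bb, hbb, rfl⟩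
      have h1 := hdecomp (y + (bb : EuclideanSpace ℝ (Fin (m+1))))
      set c0 := b.repr (y + (bb : EuclideanSpace ℝ (Fin (m+1)))) 0
      set z := v.repr.symm (WithLp.toLp 2 fun j : Fin m => b.repr (y + (bb : EuclideanSpace ℝ (Fin (m+1)))) j.succ) with hz_def
      have hzb : (z : EuclideanSpace ℝ (Fin (m+1))) - (bb : EuclideanSpace ℝ (Fin (m+1))) = y - c0 • u := by
        rw [sub_eq_sub_iff_add_eq_add, h1]
        exact add_comm _ _
      have hmem1 : (z : EuclideanSpace ℝ (Fin (m+1))) - bb ∈ ℓᗮ := Submodule.sub_mem _ z.2 bb.2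
      have hmem2 : (z : EuclideanSpace ℝ (Fin (m+1))) - bb ∈ ℓ := by
        rw [hzb]; exact Submodule.sub_mem _ hy (ℓ.smul_mem _ huℓ)
      have hz0 : (z : EuclideanSpace ℝ (Fin (m+1))) - bb = 0 :=
        Submodule.disjoint_def.1 ℓ.orthogonal_disjoint _ hmem2 hmem1
      have : z = bb := Subtype.coe_injective (sub_eq_zero.1 hz0)
      show (WithLp.toLp 2 (fun j : Fin m => b.repr _ j.succ)) ∈ T
      rw [hT_def, Set.mem_preimage, ← hz_def, this]
      exact hbb
    · intro hT2
      refine ⟨b.repr x 0 • u, ℓ.smul_mem _ huℓ,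
        v.repr.symm (WithLp.toLp 2 (fun j : Fin m => b.repr x j.succ)), hT2, hdecomp x⟩

end CylinderCoverAux

/-- If the unit ball `B₂^d` (`d ≥ 1`) is covered by cylinders `Cᵢ = ℓᵢ + Bᵢ`,
then `Σᵢ vol_{d-1}(Bᵢ) ≥ vol_{d-1}(B₂^{d-1})`. -/
theorem cylinder_cover_ball (d N : ℕ) (hd : 1 ≤ d)
    (ℓ : Fin N → Submodule ℝ (EuclideanSpace ℝ (Fin d)))
    (hℓ : ∀ i, Module.finrank ℝ (ℓ i) = 1)
    (B : ∀ i : Fin N, Set ↥(ℓ i)ᗮ) (hB : ∀ i, MeasurableSet (B i))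
    (hcov : Metric.closedBall (0 : EuclideanSpace ℝ (Fin d)) 1 ⊆
      ⋃ i, {x : EuclideanSpace ℝ (Fin d) |
        ∃ y ∈ ℓ i, ∃ b ∈ B i, x = y + (b : EuclideanSpace ℝ (Fin d))}) :
    volume (Metric.closedBall (0 : EuclideanSpace ℝ (Fin (d - 1))) 1)
      ≤ ∑ i : Fin N, volume (B i) := by
  obtain ⟨m, rfl⟩ : ∃ m, d = m + 1 := ⟨d - 1, (Nat.succ_pred_eq_of_pos hd).symm⟩
  show volume (Metric.closedBall (0 : EuclideanSpace ℝ (Fin m)) 1) ≤ _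
  choose e T hMP hnorm hTmeas hTvol hmem using fun i =>
    cylinder_repr (ℓ i) (hℓ i) (B i) (hB i)
  set μ := (volume : Measure (EuclideanSpace ℝ (Fin (m+1)))).withDensity fd with hμ
  set cyl : Fin N → Set (EuclideanSpace ℝ (Fin (m+1))) := fun i =>
    {x | ∃ y ∈ ℓ i, ∃ b ∈ B i, x = y + (b : EuclideanSpace ℝ (Fin (m+1)))} with hcyl_def
  have hcylμ : ∀ i, μ (cyl i) = ENNReal.ofReal Real.pi * volume (T i ∩ Metric.ball 0 1) :=
    fun i => lemA (e i) (hMP i) (hnorm i) _ (T i) (hTmeas i) (fun x => hmem i x)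
  have huniv : μ Set.univ
      = ENNReal.ofReal Real.pi * volume ((Set.univ : Set (EuclideanSpace ℝ (Fin m))) ∩ Metric.ball 0 1) :=
    lemA (ψ m) ψ_mp ψ_norm Set.univ Set.univ MeasurableSet.univ (fun x => by simp)
  have hz : μ ((⋃ i, cyl i)ᶜ) = 0 := by
    have hsub : (⋃ i, cyl i)ᶜ ⊆ (Metric.ball (0 : EuclideanSpace ℝ (Fin (m+1))) 1)ᶜ :=
      Set.compl_subset_compl.2 (Metric.ball_subset_closedBall.trans hcov)
    refine le_antisymm (le_trans (measure_mono hsub) ?_) zero_le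
    rw [hμ, withDensity_apply _ measurableSet_ball.compl]
    rw [setLIntegral_congr_fun measurableSet_ball.compl
      (fun x hx => fd_of_not_mem hx)]
    simp
  have key : μ Set.univ ≤ ∑ i, μ (cyl i) := by
    calc μ Set.univ = μ ((⋃ i, cyl i) ∪ (⋃ i, cyl i)ᶜ) := by rw [Set.union_compl_self]
    _ ≤ μ (⋃ i, cyl i) + μ ((⋃ i, cyl i)ᶜ) := measure_union_le _ _
    _ = μ (⋃ i, cyl i) := by rw [hz, add_zero]
    _ ≤ ∑ i, μ (cyl i) := measure_iUnion_fintype_le _ _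
  rw [huniv] at key
  simp_rw [hcylμ] at key
  have hReal.pi : (ENNReal.ofReal Real.pi) ≠ 0 := by
    simp [ENNReal.ofReal_eq_zero, not_le, Real.pi_pos]
  have hReal.pi' : (ENNReal.ofReal Real.pi) ≠ ⊤ := ENNReal.ofReal_ne_top
  rw [Set.univ_inter] at key
  have hfinal : ENNReal.ofReal Real.pi * volume (Metric.closedBall (0 : EuclideanSpace ℝ (Fin m)) 1)
      ≤ ENNReal.ofReal Real.pi * ∑ i, volume (B i) := by
    calc ENNReal.ofReal Real.pi * volume (Metric.closedBall (0 : EuclideanSpace ℝ (Fin m)) 1)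
        = ENNReal.ofReal Real.pi * volume (Metric.ball (0 : EuclideanSpace ℝ (Fin m)) 1) := by
          congr 1
          cases m with
          | zero =>
            congr 1
            ext x
            have hx : x = 0 := by ext i; exact i.elim0
            simp [hx]
          | succ n => rw [EuclideanSpace.volume_closedBall, EuclideanSpace.volume_ball]
    _ ≤ ∑ i, ENNReal.ofReal Real.pi * volume (T i ∩ Metric.ball 0 1) := key
    _ ≤ ∑ i, ENNReal.ofReal Real.pi * volume (B i) := by
        refine Finset.sum_le_sum (fun i _ => ?_)
        rw [← hTvol i]
        exact mul_le_mul_right (measure_mono Set.inter_subset_left) _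
    _ = ENNReal.ofReal Real.pi * ∑ i, volume (B i) := by rw [Finset.mul_sum]
  exact (ENNReal.mul_le_mul_iff_right hReal.pi hReal.pi').1 hfinal
end

section
/- Let 1 ≤ k ≤ d−1, let K be a convex body in ℝ^d, and let E be a k-dimensional linear subspace of ℝ^d. Then max_{x ∈ ℝ^d} vol_{d−k}(K ∩ (x + E^⊥)) · vol_k(P_E K) ≤ binomial(d,k) · vol_d(K). -/
open MeasureTheory Set intervalIntegral
open scoped ENNReal Pointwise


lemma fact_prod_range (k m : ℕ) :
    (k.factorial * ∏ j ∈ Finset.range m, (k + 1 + j) : ℕ) = (k + m).factorial := by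
  induction m with
  | zero => simp
  | succ n ih =>
    rw [Finset.prod_range_succ, ← mul_assoc, ih, ← Nat.add_assoc, Nat.factorial_succ]
    ring

lemma beta_nat (k m : ℕ) (hm : 1 ≤ m) :
    ∫ t in (0:ℝ)..1, t ^ k * (1 - t) ^ (m - 1)
      = (k.factorial * (m - 1).factorial : ℝ) / (k + m).factorial := by
  have hm' : (m - 1) + 1 = m := Nat.succ_pred_eq_of_pos hm
  have h1 : Complex.betaIntegral ((k:ℂ) + 1) (((m - 1) : ℕ) + 1)
      = ((m-1).factorial : ℂ) / ∏ j ∈ Finset.range ((m-1)+1), ((k:ℂ) + 1 + j) := by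
    apply Complex.betaIntegral_eval_nat_add_one_right
    simp
    positivity
  rw [hm', show ((m-1:ℕ):ℂ)+1 = (m:ℂ) from by exact_mod_cast congrArg (Nat.cast : ℕ → ℂ) hm'] at h1
  have h2 : Complex.betaIntegral ((k:ℂ) + 1) m
      = ∫ t in (0:ℝ)..1, ((t ^ k * (1 - t) ^ (m - 1) : ℝ) : ℂ) := by
    rw [Complex.betaIntegral]
    congr 1
    ext t
    push_cast
    rw [show ((k:ℂ) + 1 - 1) = ((k : ℕ) : ℂ) by ring, Complex.cpow_natCast,
      show ((m:ℂ) - 1) = (((m - 1 : ℕ)) : ℂ) by push_cast [Nat.cast_sub hm]; ring,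
      Complex.cpow_natCast]
  have h3 : (∏ j ∈ Finset.range m, ((k:ℂ) + 1 + j)) * (k.factorial : ℂ) = ((k+m).factorial : ℂ) := by
    have h := fact_prod_range k m
    have h' : ((k.factorial : ℕ) : ℂ) * ((∏ j ∈ Finset.range m, (k + 1 + j) : ℕ) : ℂ)
        = (((k+m).factorial : ℕ) : ℂ) := by exact_mod_cast congrArg (Nat.cast : ℕ → ℂ) h
    push_cast at h'
    linear_combination h'
  rw [intervalIntegral.integral_ofReal] at h2
  have h4 : ((∫ t in (0:ℝ)..1, t ^ k * (1 - t) ^ (m - 1) : ℝ) : ℂ)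
      = ((m-1).factorial : ℂ) / ∏ j ∈ Finset.range m, ((k:ℂ) + 1 + j) := by
    rw [← h2, h1]
  have hprod_ne : (∏ j ∈ Finset.range m, ((k:ℂ) + 1 + j)) ≠ 0 := by
    apply Finset.prod_ne_zero_iff.2
    intro j _
    have h0 : ((k + 1 + j : ℕ) : ℂ) ≠ 0 := Nat.cast_ne_zero.2 (by omega)
    convert h0 using 1
    push_cast
    ring
  have h5 : ((∫ t in (0:ℝ)..1, t ^ k * (1 - t) ^ (m - 1) : ℝ) : ℂ)
      = ((k.factorial * (m - 1).factorial : ℝ) : ℂ) / (((k + m).factorial : ℝ) : ℂ) := by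
    rw [h4]
    have hkf : ((k.factorial : ℂ)) ≠ 0 := by exact_mod_cast k.factorial_ne_zero
    have hkmf : (((k+m).factorial : ℂ)) ≠ 0 := by exact_mod_cast (k+m).factorial_ne_zero
    push_cast
    field_simp
    linear_combination -((m-1).factorial : ℂ) * h3
  exact_mod_cast h5

lemma pow_int (m : ℕ) (hm : 1 ≤ m) (t0 : ℝ) :
    ∫ t in t0..1, (m:ℝ) * (1-t)^(m-1) = (1-t0)^m := by
  rw [intervalIntegral.integral_const_mul]
  rw [intervalIntegral.integral_comp_sub_left (fun s => s ^ (m-1)) 1]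
  rw [integral_pow]
  rw [Nat.sub_add_cancel hm]
  field_simp
  rw [sub_self, zero_pow (by omega), sub_zero, Nat.cast_sub hm]
  push_cast
  ring

lemma lint_Icc (m : ℕ) (hm : 1 ≤ m) (t0 : ℝ) (ht0 : t0 ∈ Icc (0:ℝ) 1) :
    ∫⁻ t in Icc t0 1, ENNReal.ofReal ((m:ℝ) * (1-t)^(m-1)) = ENNReal.ofReal ((1-t0)^m) := by
  rw [← MeasureTheory.ofReal_integral_eq_lintegral_ofReal]
  · rw [MeasureTheory.integral_Icc_eq_integral_Ioc,
      ← intervalIntegral.integral_of_le ht0.2, pow_int m hm t0]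
  · exact (Continuous.integrableOn_Icc (by continuity))
  · filter_upwards [ae_restrict_mem measurableSet_Icc] with t ht
    have : (0:ℝ) ≤ 1 - t := by linarith [ht.2]
    positivity

lemma lint_beta (k m : ℕ) (hm : 1 ≤ m) :
    ∫⁻ t in Ioo (0:ℝ) 1, ENNReal.ofReal ((m:ℝ) * (1-t)^(m-1)) * ENNReal.ofReal (|t|^k)
      = ENNReal.ofReal ((k.factorial * m.factorial : ℝ) / (k+m).factorial) := by
  have hcong : ∀ t ∈ Ioo (0:ℝ) 1,
      ENNReal.ofReal ((m:ℝ) * (1-t)^(m-1)) * ENNReal.ofReal (|t|^k)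
        = ENNReal.ofReal ((m:ℝ) * (1-t)^(m-1) * t^k) := by
    intro t ht
    rw [abs_of_pos ht.1, ← ENNReal.ofReal_mul]
    have : (0:ℝ) ≤ 1 - t := by linarith [ht.2.le]
    positivity
  rw [setLIntegral_congr_fun measurableSet_Ioo (fun t ht => hcong t ht)]
  rw [← MeasureTheory.ofReal_integral_eq_lintegral_ofReal]
  · congr 1
    rw [← MeasureTheory.integral_Ioc_eq_integral_Ioo,
      ← intervalIntegral.integral_of_le (by norm_num : (0:ℝ) ≤ 1)]
    have : ∀ t : ℝ, (m:ℝ) * (1-t)^(m-1) * t^k = (m:ℝ) * (t ^ k * (1-t)^(m-1)) := by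
      intro t; ring
    simp_rw [this]
    rw [intervalIntegral.integral_const_mul, beta_nat k m hm]
    rw [show m.factorial = m * (m-1).factorial from (Nat.succ_pred_eq_of_pos hm ▸ rfl :
      m.factorial = m * (m-1).factorial)]
    push_cast
    ring
  · exact ((Continuous.integrableOn_Icc (by continuity)).mono_set Ioo_subset_Icc_self)
  · filter_upwards [ae_restrict_mem measurableSet_Ioo] with t ht
    have h1 : (0:ℝ) ≤ 1 - t := by linarith [ht.2.le]
    have h2 : (0:ℝ) ≤ t := ht.1.le
    positivity





lemma cone_bound {V : Type*} [NormedAddCommGroup V] [NormedSpace ℝ V]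
    [MeasurableSpace V] [BorelSpace V] [FiniteDimensional ℝ V]
    (μ : Measure V) [μ.IsAddHaarMeasure] {k m : ℕ} (hm : 1 ≤ m)
    (hk : Module.finrank ℝ V = k) {C : Set V} (hCcomp : IsCompact C) (hCconv : Convex ℝ C)
    {u0 : V} (hu0 : u0 ∈ C) {f : V → ℝ≥0∞} (hf : Measurable f) (M : ℝ≥0∞)
    (hcone : ∀ t ∈ Icc (0:ℝ) 1, ∀ c ∈ C,
      ENNReal.ofReal ((1-t)^m) * M ≤ f ((1-t) • u0 + t • c)) :
    M * μ C ≤ ((k+m).choose k : ℝ≥0∞) * ∫⁻ x in C, f x ∂μ := by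
  have hCm : MeasurableSet C := hCcomp.measurableSet
  set g : ℝ → ℝ≥0∞ := fun t => ENNReal.ofReal ((m:ℝ) * (1-t)^(m-1)) with hg
  have hgmeas : Measurable g :=
    ENNReal.measurable_ofReal.comp (Continuous.measurable (by continuity))
  set D : Set (V × ℝ) := {p | p.2 ∈ Ioo (0:ℝ) 1 ∧ u0 + p.2⁻¹ • (p.1 - u0) ∈ C} with hD
  have hDmeas : MeasurableSet D := by
    have h1 : Measurable fun p : V × ℝ => u0 + p.2⁻¹ • (p.1 - u0) :=
      measurable_const.add ((measurable_snd.inv).smul (measurable_fst.sub measurable_const))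
    exact (measurable_snd measurableSet_Ioo).inter (h1 hCm)
  -- slices of D
  have hslice : ∀ t ∈ Ioo (0:ℝ) 1, ∀ x : V,
      ((x, t) ∈ D ↔ ∃ c ∈ C, (1-t) • u0 + t • c = x) := by
    intro t ht x
    constructor
    · rintro ⟨-, hc⟩
      refine ⟨u0 + t⁻¹ • (x - u0), hc, ?_⟩
      rw [smul_add, smul_smul, mul_inv_cancel₀ ht.1.ne', one_smul]
      rw [← add_assoc, ← add_smul]
      have : (1 - t) + t = 1 := by ring
      rw [this, one_smul]
      abel
    · rintro ⟨c, hc, rfl⟩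
      refine ⟨ht, ?_⟩
      have : (1-t) • u0 + t • c - u0 = t • (c - u0) := by
        rw [smul_sub, sub_smul, one_smul]
        abel
      rw [this, smul_smul, inv_mul_cancel₀ ht.1.ne', one_smul]
      simpa using hc
  -- pointwise bound
  have key : ∀ x ∈ C, M * ∫⁻ t in Ioo (0:ℝ) 1, g t * D.indicator 1 (x, t) ≤ f x := by
    intro x hx
    set T : Set ℝ := {t | t ∈ Icc (0:ℝ) 1 ∧ ∃ c ∈ C, (1-t) • u0 + t • c = x} with hT
    have h1T : (1:ℝ) ∈ T := ⟨⟨zero_le_one, le_refl 1⟩, x, hx, by simp⟩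
    have hTcomp : IsCompact T := by
      have hS : IsCompact ((Icc (0:ℝ) 1 ×ˢ C) ∩ {p : ℝ × V | (1-p.1) • u0 + p.1 • p.2 = x}) := by
        apply (isCompact_Icc.prod hCcomp).inter_right
        have : Continuous fun p : ℝ × V => (1-p.1) • u0 + p.1 • p.2 := by continuity
        exact isClosed_singleton.preimage this
      have : T = Prod.fst '' ((Icc (0:ℝ) 1 ×ˢ C) ∩ {p : ℝ × V | (1-p.1) • u0 + p.1 • p.2 = x}) := by
        ext t
        constructor
        · rintro ⟨ht, c, hc, hcx⟩
          exact ⟨(t, c), ⟨⟨ht, hc⟩, hcx⟩, rfl⟩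
        · rintro ⟨⟨t', c⟩, ⟨⟨ht, hc⟩, hcx⟩, rfl⟩
          exact ⟨ht, c, hc, hcx⟩
      rw [this]
      exact hS.image continuous_fst
    set t0 : ℝ := sInf T with ht0def
    have ht0T : t0 ∈ T := hTcomp.sInf_mem ⟨1, h1T⟩
    have ht0 : t0 ∈ Icc (0:ℝ) 1 := ht0T.1
    have hbdd : BddBelow T := ⟨0, fun s hs => hs.1.1⟩
    -- the pointwise integrand bound
    have hpt : ∀ t ∈ Ioo (0:ℝ) 1, g t * D.indicator 1 (x, t) ≤ (Icc t0 1).indicator g t := by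
      intro t ht
      by_cases hxt : (x, t) ∈ D
      · have htT : t ∈ T := by
          obtain ⟨c, hc, hcx⟩ := (hslice t ht x).1 hxt
          exact ⟨⟨ht.1.le, ht.2.le⟩, c, hc, hcx⟩
        have : t ∈ Icc t0 1 := ⟨csInf_le hbdd htT, ht.2.le⟩
        rw [indicator_of_mem hxt, indicator_of_mem this]
        simp
      · rw [indicator_of_notMem hxt]
        simp
    have hint : ∫⁻ t in Ioo (0:ℝ) 1, g t * D.indicator 1 (x, t)
        ≤ ENNReal.ofReal ((1-t0)^m) := by
      calc ∫⁻ t in Ioo (0:ℝ) 1, g t * D.indicator 1 (x, t)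
          ≤ ∫⁻ t in Ioo (0:ℝ) 1, (Icc t0 1).indicator g t :=
            setLIntegral_mono (hgmeas.indicator measurableSet_Icc) hpt
        _ ≤ ∫⁻ t, (Icc t0 1).indicator g t := setLIntegral_le_lintegral _ _
        _ = ∫⁻ t in Icc t0 1, g t := lintegral_indicator measurableSet_Icc g
        _ = ENNReal.ofReal ((1-t0)^m) := lint_Icc m hm t0 ht0
    obtain ⟨c, hc, hcx⟩ := ht0T.2
    calc M * ∫⁻ t in Ioo (0:ℝ) 1, g t * D.indicator 1 (x, t)
        ≤ M * ENNReal.ofReal ((1-t0)^m) := mul_le_mul_right hint M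
      _ = ENNReal.ofReal ((1-t0)^m) * M := mul_comm _ _
      _ ≤ f ((1-t0) • u0 + t0 • c) := hcone t0 ht0 c hc
      _ = f x := by rw [hcx]
  -- measurability of things
  have hFmeas : Measurable fun p : V × ℝ => g p.2 * D.indicator 1 p :=
    (hgmeas.comp measurable_snd).mul (measurable_one.indicator hDmeas)
  have hinner_meas : Measurable fun x : V => ∫⁻ t in Ioo (0:ℝ) 1, g t * D.indicator 1 (x, t) :=
    Measurable.lintegral_prod_right hFmeas
  have stepB : M * ∫⁻ x in C, (∫⁻ t in Ioo (0:ℝ) 1, g t * D.indicator 1 (x, t)) ∂μ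
      ≤ ∫⁻ x in C, f x ∂μ := by
    rw [← lintegral_const_mul M hinner_meas]
    exact setLIntegral_mono hf key
  have swap : ∫⁻ x in C, (∫⁻ t in Ioo (0:ℝ) 1, g t * D.indicator 1 (x, t)) ∂μ
      = ∫⁻ t in Ioo (0:ℝ) 1, (∫⁻ x in C, g t * D.indicator 1 (x, t) ∂μ) :=
    lintegral_lintegral_swap hFmeas.aemeasurable
  have hinner' : ∀ t ∈ Ioo (0:ℝ) 1, (∫⁻ x in C, g t * D.indicator 1 (x, t) ∂μ)
      = g t * ENNReal.ofReal (|t|^k) * μ C := by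
    intro t ht
    have hAtm : MeasurableSet {x : V | (x, t) ∈ D} :=
      measurable_prodMk_right hDmeas
    have hAt : {x : V | (x, t) ∈ D} = (fun c => (1-t) • u0 + t • c) '' C := by
      ext x
      rw [mem_setOf_eq, hslice t ht x]
      simp [eq_comm]
    have hsub : {x : V | (x, t) ∈ D} ⊆ C := by
      rw [hAt]
      rintro x ⟨c, hc, rfl⟩
      exact hCconv hu0 hc (by linarith [ht.2.le] : (0:ℝ) ≤ 1 - t) ht.1.le (by ring)
    have hvol : μ {x : V | (x, t) ∈ D} = ENNReal.ofReal (|t|^k) * μ C := by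
      rw [hAt]
      have himg : (fun c => (1-t) • u0 + t • c) '' C
          = (fun y => (1-t) • u0 + y) '' (t • C) := by
        rw [← image_smul, image_image]
      rw [himg, image_add_left, measure_preimage_add, ← hk, Measure.addHaar_smul, abs_pow]
    calc (∫⁻ x in C, g t * D.indicator 1 (x, t) ∂μ)
        = (∫⁻ x in C, g t * {x : V | (x, t) ∈ D}.indicator 1 x ∂μ) := rfl
      _ = g t * ∫⁻ x in C, {x : V | (x, t) ∈ D}.indicator 1 x ∂μ :=
          lintegral_const_mul _ (measurable_one.indicator hAtm)
      _ = g t * μ ({x : V | (x, t) ∈ D} ∩ C) := by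
          rw [lintegral_indicator hAtm]
          simp only [Pi.one_apply]
          rw [setLIntegral_one, Measure.restrict_apply hAtm]
      _ = g t * ENNReal.ofReal (|t|^k) * μ C := by
          rw [inter_eq_left.2 hsub, hvol, mul_assoc]
  have stepC : (∫⁻ t in Ioo (0:ℝ) 1, (∫⁻ x in C, g t * D.indicator 1 (x, t) ∂μ))
      = ENNReal.ofReal ((k.factorial * m.factorial : ℝ) / (k+m).factorial) * μ C := by
    rw [setLIntegral_congr_fun measurableSet_Ioo (fun t ht => hinner' t ht)]
    have hmeas : Measurable fun t : ℝ => g t * ENNReal.ofReal (|t|^k) :=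
      hgmeas.mul (ENNReal.measurable_ofReal.comp (Continuous.measurable
        ((continuous_abs.pow k))))
    rw [lintegral_mul_const _ hmeas, lint_beta k m hm]
  have hβ : ((k+m).choose k : ℝ≥0∞)
      * ENNReal.ofReal ((k.factorial * m.factorial : ℝ) / (k+m).factorial) = 1 := by
    rw [← ENNReal.ofReal_natCast, ← ENNReal.ofReal_mul (by positivity)]
    have hc := Nat.choose_mul_factorial_mul_factorial (Nat.le_add_right k m)
    rw [Nat.add_sub_cancel_left] at hc
    have hc' := congrArg (Nat.cast : ℕ → ℝ) hc
    push_cast at hc'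
    have hne : ((k+m).factorial : ℝ) ≠ 0 := Nat.cast_ne_zero.2 (Nat.factorial_ne_zero _)
    have : ((k+m).choose k : ℝ) * ((k.factorial * m.factorial : ℝ) / (k+m).factorial) = 1 := by
      field_simp
      linarith [hc']
    rw [this, ENNReal.ofReal_one]
  have final : M * (ENNReal.ofReal ((k.factorial * m.factorial : ℝ) / (k+m).factorial) * μ C)
      ≤ ∫⁻ x in C, f x ∂μ := by
    rw [← stepC, ← swap]
    exact stepB
  calc M * μ C
      = (((k+m).choose k : ℝ≥0∞)
          * ENNReal.ofReal ((k.factorial * m.factorial : ℝ) / (k+m).factorial)) * (M * μ C) := by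
        rw [hβ, one_mul]
    _ = ((k+m).choose k : ℝ≥0∞)
          * (M * (ENNReal.ofReal ((k.factorial * m.factorial : ℝ) / (k+m).factorial) * μ C)) := by
        ring
    _ ≤ ((k+m).choose k : ℝ≥0∞) * ∫⁻ x in C, f x ∂μ := mul_le_mul_right final _

lemma mp_orth_add {V : Type*} [NormedAddCommGroup V] [InnerProductSpace ℝ V]
    [FiniteDimensional ℝ V] [MeasurableSpace V] [BorelSpace V]
    (E : Submodule ℝ V) :
    MeasurePreserving (fun p : ↥E × ↥Eᗮ => ((p.1 : V) + (p.2 : V)))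
      (volume.prod volume) volume := by
  classical
  set k := Module.finrank ℝ ↥E with hkdef
  set m := Module.finrank ℝ ↥Eᗮ with hmdef
  set bE := stdOrthonormalBasis ℝ ↥E with hbE
  set bF := stdOrthonormalBasis ℝ ↥Eᗮ with hbF
  set v : Fin k ⊕ Fin m → V := Sum.elim (fun i => (bE i : V)) (fun j => (bF j : V)) with hv
  have hvon : Orthonormal ℝ v := by
    constructor
    · rintro (i | j)
      · have := bE.orthonormal.1 i
        rw [Submodule.coe_norm] at this
        simpa [v] using this
      · have := bF.orthonormal.1 j
        rw [Submodule.coe_norm] at this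
        simpa [v] using this
    · rintro (i | j) (i' | j') hne <;>
        simp only [v, Sum.elim_inl, Sum.elim_inr]
      · have h : inner (𝕜 := ℝ) (bE i) (bE i') = 0 :=
          bE.orthonormal.2 (fun h => hne (congrArg Sum.inl h))
        rwa [Submodule.coe_inner] at h
      · exact (Submodule.mem_orthogonal E _).1 (bF j').2 _ (bE i).2
      · rw [real_inner_comm]
        exact (Submodule.mem_orthogonal E _).1 (bF j).2 _ (bE i').2
      · have h : inner (𝕜 := ℝ) (bF j) (bF j') = 0 :=
          bF.orthonormal.2 (fun h => hne (congrArg Sum.inr h))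
        rwa [Submodule.coe_inner] at h
  have hspan : ⊤ ≤ Submodule.span ℝ (Set.range v) := by
    rw [hv, Sum.elim_range, Submodule.span_union]
    have e1 : Submodule.span ℝ (Set.range fun i => (bE i : V)) = E := by
      have h : (Set.range fun i => (bE i : V)) = E.subtype '' (Set.range bE) := by
        rw [← Set.range_comp]; rfl
      rw [h, Submodule.span_image]
      rw [show Submodule.span ℝ (Set.range ⇑bE) = ⊤ from
        bE.toBasis.span_eq ▸ by rw [bE.coe_toBasis]]
      exact Submodule.map_subtype_top E
    have e2 : Submodule.span ℝ (Set.range fun j => (bF j : V)) = Eᗮ := by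
      have h : (Set.range fun j => (bF j : V)) = Eᗮ.subtype '' (Set.range bF) := by
        rw [← Set.range_comp]; rfl
      rw [h, Submodule.span_image]
      rw [show Submodule.span ℝ (Set.range ⇑bF) = ⊤ from
        bF.toBasis.span_eq ▸ by rw [bF.coe_toBasis]]
      exact Submodule.map_subtype_top Eᗮ
    rw [e1, e2, Submodule.sup_orthogonal_of_hasOrthogonalProjection]
  set b : OrthonormalBasis (Fin k ⊕ Fin m) ℝ V := OrthonormalBasis.mk hvon hspan with hb
  have h1 : MeasurePreserving (Prod.map (⇑bE.repr) (⇑bF.repr))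
      (volume.prod volume) (volume.prod volume) :=
    (bE.measurePreserving_repr).prod (bF.measurePreserving_repr)
  have h2 : MeasurePreserving
      (Prod.map (⇑(MeasurableEquiv.toLp 2 (Fin k → ℝ)).symm) (⇑(MeasurableEquiv.toLp 2 (Fin m → ℝ)).symm))
      (volume.prod volume) (volume.prod volume) :=
    (EuclideanSpace.volume_preserving_symm_measurableEquiv_toLp (Fin k)).prod
      (EuclideanSpace.volume_preserving_symm_measurableEquiv_toLp (Fin m))
  have h3 : MeasurePreserving
      (⇑(MeasurableEquiv.sumPiEquivProdPi (fun _ : Fin k ⊕ Fin m => ℝ)).symm)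
      (volume.prod volume) volume :=
    volume_measurePreserving_sumPiEquivProdPi_symm _
  have h4 : MeasurePreserving (⇑(MeasurableEquiv.toLp 2 (Fin k ⊕ Fin m → ℝ)))
      volume volume :=
    (EuclideanSpace.volume_preserving_symm_measurableEquiv_toLp _).symm
  have h5 : MeasurePreserving (⇑b.repr.symm) volume volume :=
    b.repr.symm.measurePreserving
  have comp := h5.comp (h4.comp (h3.comp (h2.comp h1)))
  have heq : (⇑b.repr.symm ∘ ⇑(MeasurableEquiv.toLp 2 (Fin k ⊕ Fin m → ℝ)) ∘
      ⇑(MeasurableEquiv.sumPiEquivProdPi (fun _ : Fin k ⊕ Fin m => ℝ)).symm ∘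
      (Prod.map (⇑(MeasurableEquiv.toLp 2 (Fin k → ℝ)).symm) (⇑(MeasurableEquiv.toLp 2 (Fin m → ℝ)).symm)) ∘
      (Prod.map (⇑bE.repr) (⇑bF.repr)))
      = fun p : ↥E × ↥Eᗮ => ((p.1 : V) + (p.2 : V)) := by
    funext p
    obtain ⟨u, y⟩ := p
    simp only [Function.comp_apply, Prod.map_apply]
    rw [show ((u:V) + (y:V)) = b.repr.symm (b.repr ((u:V)+(y:V))) from
      (b.repr.symm_apply_apply _).symm]
    apply congrArg ⇑b.repr.symm
    ext i
    have hbi : ∀ i, b i = v i := fun i => by rw [hb, OrthonormalBasis.coe_mk]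
    have hrepr : b.repr ((u : V) + (y : V)) i = inner (𝕜 := ℝ) (v i) ((u : V) + (y : V)) := by
      rw [← hbi]; exact b.repr_apply_apply _ i
    cases i with
    | inl i =>
        rw [hrepr]
        show bE.repr u i = _
        simp only [v, Sum.elim_inl]
        rw [inner_add_right, (Submodule.mem_orthogonal E _).1 y.2 _ (bE i).2, add_zero,
          ← Submodule.coe_inner]
        exact bE.repr_apply_apply u i
    | inr j =>
        rw [hrepr]
        show bF.repr y j = _
        simp only [v, Sum.elim_inr]
        have hy : inner (𝕜 := ℝ) ((bF j : V)) (u : V) = 0 := by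
          rw [real_inner_comm]
          exact (Submodule.mem_orthogonal E _).1 (bF j).2 _ u.2
        rw [inner_add_right, hy, zero_add, ← Submodule.coe_inner]
        exact bF.repr_apply_apply y j
  rw [← heq]
  exact comp





set_option maxHeartbeats 1000000 in
/-- Rogers–Shephard: for a convex body `K ⊆ ℝ^d` and a `k`-dimensional
subspace `E` (`1 ≤ k ≤ d-1`),
`max_x vol_{d-k}(K ∩ (x + E^⊥)) · vol_k(P_E K) ≤ binomial(d,k) · vol_d(K)`. -/
theorem rogers_shephard_section_projection (d k : ℕ) (hk : 1 ≤ k) (hkd : k ≤ d - 1)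
    (K : Set (EuclideanSpace ℝ (Fin d)))
    (hKconv : Convex ℝ K) (hKcomp : IsCompact K) (hKint : (interior K).Nonempty)
    (E : Submodule ℝ (EuclideanSpace ℝ (Fin d))) (hE : Module.finrank ℝ E = k) :
    (⨆ x : EuclideanSpace ℝ (Fin d),
        volume {y : ↥Eᗮ | x + (y : EuclideanSpace ℝ (Fin d)) ∈ K})
      * volume (⇑(E.orthogonalProjectionOnto) '' K)
      ≤ (d.choose k : ENNReal) * volume K := by
  classical
  have hd1 : 1 ≤ d := by
    rcases Nat.eq_zero_or_pos d with h | h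
    · subst h; omega
    · exact h
  have hkd' : k < d := by omega
  set m := d - k with hm
  have hm1 : 1 ≤ m := by omega
  have hkm : k + m = d := by omega
  have hKm : MeasurableSet K := hKcomp.measurableSet
  have hEperp : Module.finrank ℝ ↥Eᗮ = m := by
    have h := Submodule.finrank_add_finrank_orthogonal (K := E)
    rw [hE, finrank_euclideanSpace_fin] at h
    omega
  set C : Set ↥E := ⇑(E.orthogonalProjectionOnto) '' K with hC
  have hCcomp : IsCompact C := hKcomp.image (E.orthogonalProjectionOnto).continuous
  have hCconv : Convex ℝ C := by
    have h := hKconv.linear_image ((E.orthogonalProjectionOnto : (EuclideanSpace ℝ (Fin d)) →L[ℝ] ↥E) : (EuclideanSpace ℝ (Fin d)) →ₗ[ℝ] ↥E)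
    simpa using h
  set f : ↥E → ℝ≥0∞ := fun u => volume {y : ↥Eᗮ | (u : (EuclideanSpace ℝ (Fin d))) + (y : (EuclideanSpace ℝ (Fin d))) ∈ K} with hf
  have hmp := mp_orth_add E
  have hpreim : MeasurableSet ((fun p : ↥E × ↥Eᗮ => ((p.1 : (EuclideanSpace ℝ (Fin d))) + (p.2 : (EuclideanSpace ℝ (Fin d))))) ⁻¹' K) :=
    hmp.measurable hKm
  have hfmeas : Measurable f := measurable_measure_prodMk_left hpreim
  have hvolK : ∫⁻ u, f u = volume K := by
    rw [← hmp.measure_preimage hKm.nullMeasurableSet, Measure.prod_apply hpreim]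
    rfl
  rw [ENNReal.iSup_mul]
  apply iSup_le
  intro x
  by_cases hSx : {y : ↥Eᗮ | x + (y : (EuclideanSpace ℝ (Fin d))) ∈ K}.Nonempty
  swap
  · rw [not_nonempty_iff_eq_empty] at hSx
    rw [hSx]
    simp
  obtain ⟨y0, hy0⟩ := hSx
  set z0 : (EuclideanSpace ℝ (Fin d)) := x + ↑y0 with hz0
  set u0 : ↥E := E.orthogonalProjectionOnto z0 with hu0def
  have hu0C : u0 ∈ C := ⟨z0, hy0, rfl⟩
  have hw : z0 - ↑u0 ∈ Eᗮ := E.sub_starProjection_mem_orthogonal z0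
  set c0 : ↥Eᗮ := y0 - ⟨z0 - ↑u0, hw⟩ with hc0
  have hxu0 : (u0 : (EuclideanSpace ℝ (Fin d))) = x + ↑c0 := by
    rw [hc0]
    push_cast
    rw [hz0]
    abel
  have hMeq : volume {y : ↥Eᗮ | x + (y : (EuclideanSpace ℝ (Fin d))) ∈ K} = f u0 := by
    have hset : {y : ↥Eᗮ | (u0 : (EuclideanSpace ℝ (Fin d))) + (y : (EuclideanSpace ℝ (Fin d))) ∈ K}
        = (fun y => c0 + y) ⁻¹' {y : ↥Eᗮ | x + (y : (EuclideanSpace ℝ (Fin d))) ∈ K} := by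
      ext y
      simp only [mem_setOf_eq, mem_preimage, Submodule.coe_add]
      rw [hxu0, add_assoc]
    rw [hf]
    simp only []
    rw [hset, measure_preimage_add]
  rw [hMeq]
  -- cone hypothesis
  have hcone : ∀ t ∈ Icc (0:ℝ) 1, ∀ c ∈ C,
      ENNReal.ofReal ((1-t)^m) * f u0 ≤ f ((1-t) • u0 + t • c) := by
    intro t ht c hcmem
    obtain ⟨z, hzK, rfl⟩ := hcmem
    have hyc : z - ↑(E.orthogonalProjectionOnto z) ∈ Eᗮ := E.sub_starProjection_mem_orthogonal z
    obtain ⟨yc, hycdef⟩ : ∃ yc : ↥Eᗮ, yc = ⟨_, hyc⟩ := ⟨_, rfl⟩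
    have hsub : (fun y : ↥Eᗮ => t • yc + (1-t) • y) '' {y : ↥Eᗮ | (u0 : (EuclideanSpace ℝ (Fin d))) + ↑y ∈ K}
        ⊆ {y : ↥Eᗮ | (((1-t) • u0 + t • (E.orthogonalProjectionOnto z) : ↥E) : (EuclideanSpace ℝ (Fin d))) + (y : (EuclideanSpace ℝ (Fin d))) ∈ K} := by
      rintro _ ⟨y, hy, rfl⟩
      have hKz : (1-t) • ((u0 : (EuclideanSpace ℝ (Fin d))) + ↑y) + t • z ∈ K :=
        hKconv hy hzK (by linarith [ht.2] : (0:ℝ) ≤ 1 - t) ht.1 (by ring)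
      show (((1-t) • u0 + t • (E.orthogonalProjectionOnto z) : ↥E) : (EuclideanSpace ℝ (Fin d))) + ↑(t • yc + (1-t) • y) ∈ K
      have hz : ((E.orthogonalProjectionOnto z : (EuclideanSpace ℝ (Fin d)))) + ↑yc = z := by
        rw [hycdef]
        push_cast
        abel
      convert hKz using 1
      conv_rhs => rw [← hz]
      push_cast
      rw [smul_add, smul_add]
      abel
    have himg : volume ((fun y : ↥Eᗮ => t • yc + (1-t) • y) '' {y : ↥Eᗮ | (u0 : (EuclideanSpace ℝ (Fin d))) + ↑y ∈ K})
        = ENNReal.ofReal ((1-t)^m) * f u0 := by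
      have h1 : (fun y : ↥Eᗮ => t • yc + (1-t) • y) '' {y : ↥Eᗮ | (u0 : (EuclideanSpace ℝ (Fin d))) + ↑y ∈ K}
          = (fun w => t • yc + w) '' ((1-t) • {y : ↥Eᗮ | (u0 : (EuclideanSpace ℝ (Fin d))) + ↑y ∈ K}) := by
        rw [← image_smul, image_image]
      rw [h1, image_add_left, measure_preimage_add, ← hEperp, Measure.addHaar_smul, abs_pow,
        abs_of_nonneg (by linarith [ht.2] : (0:ℝ) ≤ 1 - t)]
    calc ENNReal.ofReal ((1-t)^m) * f u0
        = volume ((fun y : ↥Eᗮ => t • yc + (1-t) • y) '' {y : ↥Eᗮ | (u0 : (EuclideanSpace ℝ (Fin d))) + ↑y ∈ K}) :=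
          himg.symm
      _ ≤ volume {y : ↥Eᗮ | (((1-t) • u0 + t • (E.orthogonalProjectionOnto z) : ↥E) : (EuclideanSpace ℝ (Fin d))) + (y : (EuclideanSpace ℝ (Fin d))) ∈ K} :=
          measure_mono hsub
      _ = f ((1-t) • u0 + t • (E.orthogonalProjectionOnto z)) := rfl
  have hbound := cone_bound (volume : Measure ↥E) hm1 hE hCcomp hCconv hu0C hfmeas (f u0) hcone
  calc f u0 * volume C
      ≤ ((k+m).choose k : ℝ≥0∞) * ∫⁻ u in C, f u := hbound
    _ ≤ ((k+m).choose k : ℝ≥0∞) * ∫⁻ u, f u := mul_le_mul_right (setLIntegral_le_lintegral _ _) _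
    _ = (d.choose k : ℝ≥0∞) * volume K := by rw [hvolK, hkm]
end
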